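/- Let H₁, H₂ be nonzero complex Hilbert spaces and let T ∈ B(H₂, H₁) with ‖T‖ ≤ 1. Let S = π_{(H₁,H₂,T)}(T₂) ⊆ B(H₁ × H₂), the range of the representation π_{(H₁,H₂,T)}. Then S'' = S if and only if T is not bijective. (Since S is a finite-dimensional, hence weak*-closed, subspace of B(H₁ × H₂), this says exactly that π_{(H₁,H₂,T)} has the double commutant property if and only if T is not invertible.) -/

import Mathlib

/-!
The commutant of `S` consists of the operators `A ⊕ B` with `A T = T B`. If `T` is invertible,
`(ζ, η) ↦ (0, T⁻¹ ζ)` commutes with all of them but does not lie in `S`. Conversely, testing an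
element `x ∈ S''` against `T R ⊕ R T` for rank-one `R : H₁ → H₂` shows that its diagonal blocks are
scalars, its upper corner is a multiple of `T`, and `T x₂₁ = μ`; a nonzero `μ` would make `T`
invertible, so `x₂₁ = 0` by injectivity of `T` or, failing that, by testing against `0 ⊕ B` with
`B` ranging in `ker T`. When `T = 0` the test operators are `R ⊕ 0`, `0 ⊕ R` and `0 ⊕ 1` instead.
-/

noncomputable section

open Filter

open scoped ENNReal

/-- The operator `(ζ, η) ↦ (a • ζ + b • (T η), c • η)` on `H₁ × H₂`. -/
def blockOp {H₁ H₂ : Type} [NormedAddCommGroup H₁] [InnerProductSpace ℂ H₁]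
    [NormedAddCommGroup H₂] [InnerProductSpace ℂ H₂]
    (T : H₂ →L[ℂ] H₁) (a b c : ℂ) : (H₁ × H₂) →L[ℂ] (H₁ × H₂) :=
  (a • ContinuousLinearMap.fst ℂ H₁ H₂ +
    b • T.comp (ContinuousLinearMap.snd ℂ H₁ H₂)).prod
    (c • ContinuousLinearMap.snd ℂ H₁ H₂)

open ContinuousLinearMap InnerProductSpace Set

section RankOne

variable {𝕜 E F G K : Type*} [RCLike 𝕜]
  [NormedAddCommGroup E] [NormedSpace 𝕜 E] [NormedAddCommGroup F] [InnerProductSpace 𝕜 F]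
  [NormedAddCommGroup G] [InnerProductSpace 𝕜 G] [NormedAddCommGroup K] [NormedSpace 𝕜 K]

theorem exists_eq_smul_of_comp_rankOne_comp {L L' : E →L[𝕜] G} {M M' : F →L[𝕜] K}
    (hL' : L' ≠ 0) (hM : M ≠ 0)
    (h : ∀ ζ ω, M ∘L rankOne 𝕜 ζ ω ∘L L = M' ∘L rankOne 𝕜 ζ ω ∘L L') :
    ∃ c : 𝕜, L = c • L' ∧ M' = c • M := by
  have h' : ∀ ζ ω v, inner 𝕜 ω (L v) • M ζ = inner 𝕜 ω (L' v) • M' ζ := fun ζ ω v => by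
    simpa using congr($(h ζ ω) v)
  obtain ⟨v₀, hv₀⟩ : ∃ v, L' v ≠ 0 := by simpa [ContinuousLinearMap.ext_iff] using hL'
  obtain ⟨ζ₀, hζ₀⟩ : ∃ ζ, M ζ ≠ 0 := by simpa [ContinuousLinearMap.ext_iff] using hM
  have hw : inner 𝕜 (L' v₀) (L' v₀) ≠ 0 := inner_self_ne_zero.2 hv₀
  set c := inner 𝕜 (L' v₀) (L v₀) / inner 𝕜 (L' v₀) (L' v₀) with hc
  have hM' : M' = c • M := by
    ext ζ
    rw [smul_apply, hc, div_eq_inv_mul, mul_smul, h', inv_smul_smul₀ hw]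
  refine ⟨c, ?_, hM'⟩
  ext v
  refine ext_inner_left 𝕜 fun ω => smul_left_injective 𝕜 hζ₀ ?_
  simp only [h', hM', smul_apply, inner_smul_right, mul_smul]
  rw [smul_comm]

end RankOne

section BlockAlgebra

variable {H₁ H₂ : Type} [NormedAddCommGroup H₁] [InnerProductSpace ℂ H₁]
  [NormedAddCommGroup H₂] [InnerProductSpace ℂ H₂] {T : H₂ →L[ℂ] H₁}

@[simp]
lemma blockOp_apply (T : H₂ →L[ℂ] H₁) (a b c : ℂ) (p : H₁ × H₂) :
    blockOp T a b c p = (a • p.1 + b • T p.2, c • p.2) := rfl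

def blockAlgebra (T : H₂ →L[ℂ] H₁) : Set ((H₁ × H₂) →L[ℂ] (H₁ × H₂)) :=
  {x | ∃ a b c : ℂ, x = blockOp T a b c}

lemma prodMap_mem_centralizer_blockAlgebra {A : H₁ →L[ℂ] H₁} {B : H₂ →L[ℂ] H₂}
    (h : A ∘L T = T ∘L B) : A.prodMap B ∈ centralizer (blockAlgebra T) := by
  rintro _ ⟨a, b, c, rfl⟩
  ext p <;> simp [← comp_apply A T, h]

lemma mem_centralizer_blockAlgebra_iff {y : (H₁ × H₂) →L[ℂ] (H₁ × H₂)} :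
    y ∈ centralizer (blockAlgebra T) ↔
      ∃ (A : H₁ →L[ℂ] H₁) (B : H₂ →L[ℂ] H₂), A ∘L T = T ∘L B ∧ y = A.prodMap B := by
  refine ⟨fun hy => ?_, fun ⟨A, B, h, hy⟩ => hy ▸ prodMap_mem_centralizer_blockAlgebra h⟩
  have hP : ∀ p : H₁ × H₂, ((y p).1, 0) = y (p.1, 0) := fun p => by
    simpa using congr($(hy _ ⟨1, 0, 0, rfl⟩) p)
  have hN : ∀ p : H₁ × H₂, (T (y p).2, 0) = y (T p.2, 0) := fun p => by
    simpa using congr($(hy _ ⟨0, 1, 0, rfl⟩) p)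
  refine ⟨fst ℂ H₁ H₂ ∘L y ∘L inl ℂ H₁ H₂, snd ℂ H₁ H₂ ∘L y ∘L inr ℂ H₁ H₂, ?_, ?_⟩
  · ext η
    simp [← hN (0, η)]
  · ext p
    · simp
    · simpa [Prod.mk_zero_zero] using congr(Prod.snd $(hP (p, 0))).symm
    · simpa [Prod.mk_zero_zero, eq_comm] using congr(Prod.fst $(hP (0, p)))
    · simp

lemma inr_comp_symm_comp_fst_mem_centralizer_centralizer (e : H₂ ≃L[ℂ] H₁) :
    inr ℂ H₁ H₂ ∘L (e.symm : H₁ →L[ℂ] H₂) ∘L fst ℂ H₁ H₂ ∈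
      centralizer (centralizer (blockAlgebra (e : H₂ →L[ℂ] H₁))) := by
  intro y hy
  obtain ⟨A, B, h, rfl⟩ := mem_centralizer_blockAlgebra_iff.1 hy
  refine ContinuousLinearMap.ext fun p => Prod.ext (by simp) ?_
  simpa using congr(e.symm ($h (e.symm p.1))).symm

lemma centralizer_centralizer_blockAlgebra_ne [CompleteSpace H₁] [CompleteSpace H₂]
    [Nontrivial H₁] (hT : Function.Bijective T) :
    centralizer (centralizer (blockAlgebra T)) ≠ blockAlgebra T := by
  intro h
  let e := ContinuousLinearEquiv.ofBijective T (LinearMap.ker_eq_bot.2 hT.1)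
    (LinearMap.range_eq_top.2 hT.2)
  obtain ⟨a, b, c, habc⟩ := h ▸ inr_comp_symm_comp_fst_mem_centralizer_centralizer e
  obtain ⟨ζ, hζ⟩ := exists_ne (0 : H₁)
  have : e.symm ζ = 0 := by simpa using congr(Prod.snd ($habc (ζ, 0)))
  exact hζ (by simpa using this)

lemma blocks_intertwine_of_mem_centralizer_centralizer {x : (H₁ × H₂) →L[ℂ] (H₁ × H₂)}
    (hx : x ∈ centralizer (centralizer (blockAlgebra T))) {A : H₁ →L[ℂ] H₁}
    {B : H₂ →L[ℂ] H₂} (h : A ∘L T = T ∘L B) :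
    A ∘L (fst ℂ H₁ H₂ ∘L x ∘L inl ℂ H₁ H₂) = (fst ℂ H₁ H₂ ∘L x ∘L inl ℂ H₁ H₂) ∘L A ∧
    A ∘L (fst ℂ H₁ H₂ ∘L x ∘L inr ℂ H₁ H₂) = (fst ℂ H₁ H₂ ∘L x ∘L inr ℂ H₁ H₂) ∘L B ∧
    B ∘L (snd ℂ H₁ H₂ ∘L x ∘L inl ℂ H₁ H₂) = (snd ℂ H₁ H₂ ∘L x ∘L inl ℂ H₁ H₂) ∘L A ∧
    B ∘L (snd ℂ H₁ H₂ ∘L x ∘L inr ℂ H₁ H₂) = (snd ℂ H₁ H₂ ∘L x ∘L inr ℂ H₁ H₂) ∘L B := by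
  have hc := hx _ (prodMap_mem_centralizer_blockAlgebra h)
  refine ⟨?_, ?_, ?_, ?_⟩ <;> ext v
  · simpa using congr(($hc (v, 0)).1)
  · simpa using congr(($hc (0, v)).1)
  · simpa using congr(($hc (v, 0)).2)
  · simpa using congr(($hc (0, v)).2)

lemma exists_scalar_blocks_of_ne_zero (hT : T ≠ 0) [Nontrivial H₁] [Nontrivial H₂]
    {x : (H₁ × H₂) →L[ℂ] (H₁ × H₂)} (hx : x ∈ centralizer (centralizer (blockAlgebra T))) :
    ∃ a b c : ℂ, fst ℂ H₁ H₂ ∘L x ∘L inl ℂ H₁ H₂ = a • 1 ∧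
      fst ℂ H₁ H₂ ∘L x ∘L inr ℂ H₁ H₂ = b • T ∧ snd ℂ H₁ H₂ ∘L x ∘L inr ℂ H₁ H₂ = c • 1 := by
  have rels (ζ : H₂) (ω : H₁) := blocks_intertwine_of_mem_centralizer_centralizer hx
    (comp_assoc T (rankOne ℂ ζ ω) T)
  set x₁₁ := fst ℂ H₁ H₂ ∘L x ∘L inl ℂ H₁ H₂
  set x₁₂ := fst ℂ H₁ H₂ ∘L x ∘L inr ℂ H₁ H₂
  set x₂₂ := snd ℂ H₁ H₂ ∘L x ∘L inr ℂ H₁ H₂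
  obtain ⟨a, ha, -⟩ := exists_eq_smul_of_comp_rankOne_comp (L := x₁₁) (M' := x₁₁ ∘L T)
    one_ne_zero hT fun ζ ω => by simpa only [comp_assoc, one_def, comp_id] using (rels ζ ω).1
  obtain ⟨b, hb, -⟩ := exists_eq_smul_of_comp_rankOne_comp (L := x₁₂) (M' := x₁₂)
    hT hT fun ζ ω => by simpa only [comp_assoc] using (rels ζ ω).2.1
  obtain ⟨c, -, hc⟩ := exists_eq_smul_of_comp_rankOne_comp (L := T ∘L x₂₂) (M' := x₂₂)
    hT one_ne_zero fun ζ ω => by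
      simpa only [comp_assoc, one_def, id_comp] using (rels ζ ω).2.2.2
  exact ⟨a, b, c, ha, hb, hc⟩

lemma exists_scalar_blocks_of_eq_zero [Nontrivial H₁] [Nontrivial H₂]
    {x : (H₁ × H₂) →L[ℂ] (H₁ × H₂)} (hx : x ∈ centralizer (centralizer (blockAlgebra 0))) :
    ∃ a c : ℂ, fst ℂ H₁ H₂ ∘L x ∘L inl ℂ H₁ H₂ = a • 1 ∧
      fst ℂ H₁ H₂ ∘L x ∘L inr ℂ H₁ H₂ = 0 ∧ snd ℂ H₁ H₂ ∘L x ∘L inr ℂ H₁ H₂ = c • 1 := by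
  have rels (A : H₁ →L[ℂ] H₁) (B : H₂ →L[ℂ] H₂) :=
    blocks_intertwine_of_mem_centralizer_centralizer hx (A := A) (B := B) (by simp)
  set x₁₁ := fst ℂ H₁ H₂ ∘L x ∘L inl ℂ H₁ H₂
  set x₂₂ := snd ℂ H₁ H₂ ∘L x ∘L inr ℂ H₁ H₂
  obtain ⟨a, ha, -⟩ := exists_eq_smul_of_comp_rankOne_comp (L := x₁₁) (M' := x₁₁)
    one_ne_zero one_ne_zero fun ζ ω => by
      simpa only [one_def, id_comp, comp_id] using (rels (rankOne ℂ ζ ω) 0).1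
  obtain ⟨c, -, hc⟩ := exists_eq_smul_of_comp_rankOne_comp (L := x₂₂) (M' := x₂₂)
    one_ne_zero one_ne_zero fun ζ ω => by
      simpa only [one_def, id_comp, comp_id] using (rels 0 (rankOne ℂ ζ ω)).2.2.2
  exact ⟨a, c, ha, by simpa [one_def] using (rels 0 1).2.1.symm, hc⟩

lemma lowerLeft_block_eq_zero [Nontrivial H₁] [Nontrivial H₂] (hT : ¬Function.Bijective T)
    {x : (H₁ × H₂) →L[ℂ] (H₁ × H₂)} (hx : x ∈ centralizer (centralizer (blockAlgebra T))) :
    snd ℂ H₁ H₂ ∘L x ∘L inl ℂ H₁ H₂ = 0 := by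
  have rels {A : H₁ →L[ℂ] H₁} {B : H₂ →L[ℂ] H₂} (h : A ∘L T = T ∘L B) :=
    (blocks_intertwine_of_mem_centralizer_centralizer hx h).2.2.1
  set x₂₁ := snd ℂ H₁ H₂ ∘L x ∘L inl ℂ H₁ H₂
  by_cases hinj : Function.Injective T
  · obtain ⟨μ, hμ, -⟩ := exists_eq_smul_of_comp_rankOne_comp (L := T ∘L x₂₁) (M' := x₂₁ ∘L T)
      one_ne_zero one_ne_zero fun ζ ω => by
        simpa only [comp_assoc, one_def, id_comp, comp_id] using
          rels (comp_assoc T (rankOne ℂ ζ ω) T)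
    have hTx (v : H₁) : T (x₂₁ v) = μ • v := by simpa using congr($hμ v)
    obtain rfl : μ = 0 := by
      by_contra hμ0
      exact hT ⟨hinj, fun v => ⟨μ⁻¹ • x₂₁ v, by rw [map_smul, hTx, inv_smul_smul₀ hμ0]⟩⟩
    ext v
    exact hinj (by simp [hTx])
  · obtain ⟨ξ, hTξ, hξ⟩ : ∃ ξ, T ξ = 0 ∧ ξ ≠ 0 := by
      simpa [injective_iff_map_eq_zero] using hinj
    ext v
    have h := rels (A := 0) (B := rankOne ℂ ξ (x₂₁ v)) (by simp [comp_rankOne, hTξ])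
    simpa [hξ] using congr($h v)

lemma eq_blockOp_of_blocks {x : (H₁ × H₂) →L[ℂ] (H₁ × H₂)} {a b c : ℂ}
    (h₁₁ : fst ℂ H₁ H₂ ∘L x ∘L inl ℂ H₁ H₂ = a • 1)
    (h₁₂ : fst ℂ H₁ H₂ ∘L x ∘L inr ℂ H₁ H₂ = b • T)
    (h₂₁ : snd ℂ H₁ H₂ ∘L x ∘L inl ℂ H₁ H₂ = 0)
    (h₂₂ : snd ℂ H₁ H₂ ∘L x ∘L inr ℂ H₁ H₂ = c • 1) : x = blockOp T a b c := by
  ext v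
  · simpa using congr($h₁₁ v)
  · simpa using congr($h₂₁ v)
  · simpa using congr($h₁₂ v)
  · simpa using congr($h₂₂ v)

lemma exists_scalar_blocks [Nontrivial H₁] [Nontrivial H₂]
    {x : (H₁ × H₂) →L[ℂ] (H₁ × H₂)} (hx : x ∈ centralizer (centralizer (blockAlgebra T))) :
    ∃ a b c : ℂ, fst ℂ H₁ H₂ ∘L x ∘L inl ℂ H₁ H₂ = a • 1 ∧
      fst ℂ H₁ H₂ ∘L x ∘L inr ℂ H₁ H₂ = b • T ∧ snd ℂ H₁ H₂ ∘L x ∘L inr ℂ H₁ H₂ = c • 1 := by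
  rcases eq_or_ne T 0 with rfl | hT
  · obtain ⟨a, c, h₁₁, h₁₂, h₂₂⟩ := exists_scalar_blocks_of_eq_zero hx
    exact ⟨a, 0, c, h₁₁, by rw [h₁₂, smul_zero], h₂₂⟩
  · exact exists_scalar_blocks_of_ne_zero hT hx

lemma centralizer_centralizer_blockAlgebra_subset [Nontrivial H₁] [Nontrivial H₂]
    (hT : ¬Function.Bijective T) :
    centralizer (centralizer (blockAlgebra T)) ⊆ blockAlgebra T := fun x hx => by
  obtain ⟨a, b, c, h₁₁, h₁₂, h₂₂⟩ := exists_scalar_blocks hx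
  exact ⟨a, b, c, eq_blockOp_of_blocks h₁₁ h₁₂ (lowerLeft_block_eq_zero hT hx) h₂₂⟩

end BlockAlgebra

theorem blockRep_double_commutant_iff_general
    (H₁ : Type) [NormedAddCommGroup H₁] [InnerProductSpace ℂ H₁] [CompleteSpace H₁] (H₂ : Type) [NormedAddCommGroup H₂] [InnerProductSpace ℂ H₂] [CompleteSpace H₂]
    [Nontrivial H₁] [Nontrivial H₂]
    (T : H₂ →L[ℂ] H₁) :
    (Set.centralizer (Set.centralizer
        {x : (H₁ × H₂) →L[ℂ] (H₁ × H₂) | ∃ a b c : ℂ, x = blockOp T a b c})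
      = {x : (H₁ × H₂) →L[ℂ] (H₁ × H₂) | ∃ a b c : ℂ, x = blockOp T a b c})
    ↔ ¬Function.Bijective ⇑T :=
  ⟨fun h hT => centralizer_centralizer_blockAlgebra_ne hT h,
    fun hT => (centralizer_centralizer_blockAlgebra_subset hT).antisymm
      subset_centralizer_centralizer⟩

/-- For nonzero Hilbert spaces `H₁, H₂` and a contraction `T : H₂ → H₁`, the range `S` of
the representation `π_(H₁,H₂,T)` of the upper triangular `2 × 2` matrices on `H₁ ⊕ H₂`
satisfies `S'' = S` if and only if `T` is not invertible. -/
theorem blockRep_double_commutant_iff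
    (H₁ : Type) [NormedAddCommGroup H₁] [InnerProductSpace ℂ H₁] [CompleteSpace H₁] (H₂ : Type) [NormedAddCommGroup H₂] [InnerProductSpace ℂ H₂] [CompleteSpace H₂]
    [Nontrivial H₁] [Nontrivial H₂]
    (T : H₂ →L[ℂ] H₁) (hT : ‖T‖ ≤ 1) :
    (Set.centralizer (Set.centralizer
        {x : (H₁ × H₂) →L[ℂ] (H₁ × H₂) | ∃ a b c : ℂ, x = blockOp T a b c})
      = {x : (H₁ × H₂) →L[ℂ] (H₁ × H₂) | ∃ a b c : ℂ, x = blockOp T a b c})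
    ↔ ¬Function.Bijective ⇑T :=
  blockRep_double_commutant_iff_general H₁ H₂ T
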